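/- Let $A=[a_{i,j}]_{1\le i,j\le n}$ be a matrix over a commutative ring such that $a_{i,j}=0$ whenever $i+j$ is an even number greater than two. If $n=2m$ for some positive integer $m$, then $\det(A)=(-1)^m\det[a_{2i,2j-1}]_{1\le i,j\le m}\cdot\det[a_{2i-1,2j}]_{1\le i,j\le m}$. -/

import Mathlib

/-!
Listing the rows and columns of `A` as evens first, then odds, turns `A` into a block matrix
`[[D, B], [C, 0]]`, whose zero block consists of the entries `a_{i,j}` with `i` and `j` both even
(1-based). Swapping the two column blocks, which costs the sign `(-1)^m`, gives the block
triangular matrix `[[B, D], [0, C]]` of determinant `det B * det C`; the block `D` plays no role.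
-/

open Matrix

namespace Matrix

variable {ι R : Type*} [Fintype ι] [DecidableEq ι] [CommRing R]

theorem det_fromBlocks_zero_one_one_zero :
    (fromBlocks 0 1 1 0 : Matrix (ι ⊕ ι) (ι ⊕ ι) R).det = (-1) ^ Fintype.card ι := by
  have hfactor : (fromBlocks 0 1 1 0 : Matrix (ι ⊕ ι) (ι ⊕ ι) R) =
      fromBlocks 1 1 0 1 * fromBlocks 1 0 (-1) 1 * fromBlocks 1 1 0 1 * fromBlocks (-1) 0 0 1 := by
    simp only [fromBlocks_multiply]
    norm_num
  simp [hfactor, det_neg]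

theorem det_fromBlocks_zero₂₂ (A B C : Matrix ι ι R) :
    (fromBlocks A B C 0).det = (-1) ^ Fintype.card ι * (B.det * C.det) := by
  have hswap : fromBlocks B A 0 C = fromBlocks A B C 0 * fromBlocks 0 1 1 0 := by
    simp [fromBlocks_multiply]
  have hdet := congrArg det hswap
  rw [det_fromBlocks_zero₂₁, det_mul, det_fromBlocks_zero_one_one_zero] at hdet
  rw [hdet, mul_left_comm, ← mul_pow, neg_one_mul, neg_neg, one_pow, mul_one]

end Matrix

def finSumFinEquivEvenOdd (m : ℕ) : Fin m ⊕ Fin m ≃ Fin (2 * m) where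
  toFun := Sum.elim (fun j => ⟨2 * j, by omega⟩) (fun j => ⟨2 * j + 1, by omega⟩)
  invFun k :=
    if (k : ℕ) % 2 = 0 then .inl ⟨k / 2, by omega⟩ else .inr ⟨k / 2, by omega⟩
  left_inv := by
    rintro (j | j) <;> simp [Fin.ext_iff]; omega
  right_inv k := by
    by_cases h : (k : ℕ) % 2 = 0 <;> simp [h, Fin.ext_iff] <;> omega

/-- If `A = [a_{i,j}]_{1 ≤ i,j ≤ n}` (rows/columns indexed `1..n`, realized as
`Fin n` with `i` standing for the `(i+1)`-st row/column) is a matrix over a commutative ring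
with `a_{i,j} = 0` whenever `i + j` is an even number greater than two, and `n = 2m` with
`m ≥ 1`, then `det(A) = (-1)^m det[a_{2i,2j-1}]_{1≤i,j≤m} * det[a_{2i-1,2j}]_{1≤i,j≤m}`. -/
theorem stmt1 {R : Type*} [CommRing R] (m : ℕ)
    (A : Matrix (Fin (2 * m)) (Fin (2 * m)) R)
    (hA : ∀ i j : Fin (2 * m), Even (((i : ℕ) + 1) + ((j : ℕ) + 1)) →
      ((i : ℕ) + 1) + ((j : ℕ) + 1) > 2 → A i j = 0) :
    A.det =
      (-1) ^ m *
      ((Matrix.of fun i j : Fin m =>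
          A ⟨2 * (i : ℕ) + 1, by have := i.isLt; omega⟩
            ⟨2 * (j : ℕ), by have := j.isLt; omega⟩).det *
      (Matrix.of fun i j : Fin m =>
          A ⟨2 * (i : ℕ), by have := i.isLt; omega⟩
            ⟨2 * (j : ℕ) + 1, by have := j.isLt; omega⟩).det) := by
  set M := A.submatrix (finSumFinEquivEvenOdd m) (finSumFinEquivEvenOdd m)
  have hodd : M.toBlocks₂₂ = 0 := by
    ext i j
    exact hA _ _ ⟨i + j + 2, by simp [finSumFinEquivEvenOdd]; omega⟩
      (by simp [finSumFinEquivEvenOdd]; omega)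
  calc A.det = M.det := (det_submatrix_equiv_self _ A).symm
    _ = (fromBlocks M.toBlocks₁₁ M.toBlocks₁₂ M.toBlocks₂₁ 0).det := by
      rw [← hodd, fromBlocks_toBlocks]
    _ = _ := by rw [det_fromBlocks_zero₂₂, Fintype.card_fin, mul_comm (det _)]; rfl
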